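/- Let G be a graph such that M = M[IAS(G)] is 3-connected (τ(M) ≥ 3), with ground set W = W(G). Then the following three collections of subsets of W coincide: (a) the ordinary 3-separations S of M with |S|, |W−S| ≥ 6; (b) the ordinary 3-separations S of M with |S|, |W−S| ≥ 4; (c) the vertical 3-separations of M. -/

import Mathlib

open scoped ENat

variable {V : Type*} [Fintype V] [DecidableEq V]

/-- The column of the matrix `IAS(G) = (I | A | A+I)` indexed by `(v, i)`:
`i = 0` gives `φ(v)` (identity column), `i = 1` gives `χ(v)` (column of `A`),
`i = 2` gives `ψ(v)` (column of `A + I`). -/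
def iasCol (A : Matrix V V (ZMod 2)) : V × Fin 3 → V → ZMod 2 :=
  fun p w =>
    if p.2 = 0 then (if w = p.1 then 1 else 0)
    else if p.2 = 1 then A w p.1
    else A w p.1 + (if w = p.1 then 1 else 0)

/-- The rank of a subset of the ground set `W(G) = V × Fin 3` of the isotropic
matroid: the GF(2)-rank of the corresponding set of columns. -/
noncomputable def iasRank (A : Matrix V V (ZMod 2)) (S : Set (V × Fin 3)) : ℕ :=
  Module.finrank (ZMod 2) (Submodule.span (ZMod 2) (iasCol A '' S))

/-- The connectivity function `λ(S) = r(S) + r(W - S) - r(M)`. -/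
noncomputable def iasLambda (A : Matrix V V (ZMod 2)) (S : Set (V × Fin 3)) : ℕ :=
  iasRank A S + iasRank A Sᶜ - iasRank A Set.univ

/-- Independence in the isotropic matroid. -/
def iasIndep (A : Matrix V V (ZMod 2)) (S : Set (V × Fin 3)) : Prop :=
  LinearIndependent (ZMod 2) (fun s : S => iasCol A s.1)

/-- Circuits of the isotropic matroid: minimal dependent sets. -/
def iasCircuit (A : Matrix V V (ZMod 2)) (C : Set (V × Fin 3)) : Prop :=
  ¬ iasIndep A C ∧ ∀ S ⊂ C, iasIndep A S

/-- An ordinary `k`-separation: `λ(S) < k` and `|S|, |W - S| ≥ k`. -/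
def OrdinarySep (A : Matrix V V (ZMod 2)) (k : ℕ) (S : Set (V × Fin 3)) : Prop :=
  0 < k ∧ iasLambda A S < k ∧ k ≤ S.ncard ∧ k ≤ Sᶜ.ncard

/-- A cyclic `k`-separation: `λ(S) < k` and both `S` and `W - S` are dependent. -/
def CyclicSep (A : Matrix V V (ZMod 2)) (k : ℕ) (S : Set (V × Fin 3)) : Prop :=
  0 < k ∧ iasLambda A S < k ∧ ¬ iasIndep A S ∧ ¬ iasIndep A Sᶜ

/-- A vertical `k`-separation: `λ(S) < k` and `r(S), r(W - S) ≥ k`. -/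
def VerticalSep (A : Matrix V V (ZMod 2)) (k : ℕ) (S : Set (V × Fin 3)) : Prop :=
  0 < k ∧ iasLambda A S < k ∧ k ≤ iasRank A S ∧ k ≤ iasRank A Sᶜ

/-- `τ(M) = min {k : M has an ordinary k-separation}`, with `min ∅ = ∞`. -/
noncomputable def iasTau (A : Matrix V V (ZMod 2)) : ℕ∞ :=
  sInf {k : ℕ∞ | ∃ m : ℕ, (m : ℕ∞) = k ∧ ∃ S, OrdinarySep A m S}

/-- `κ*(M) = min ({k : M has a cyclic k-separation} ∪ {|W| - r(M)})`. -/
noncomputable def iasKappaStar (A : Matrix V V (ZMod 2)) : ℕ :=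
  sInf ({k : ℕ | ∃ S, CyclicSep A k S} ∪ {3 * Fintype.card V - iasRank A Set.univ})

/-- `κ(M) = min ({k : M has a vertical k-separation} ∪ {r(M)})`. -/
noncomputable def iasKappa (A : Matrix V V (ZMod 2)) : ℕ :=
  sInf ({k : ℕ | ∃ S, VerticalSep A k S} ∪ {iasRank A Set.univ})

/-- The simple graph underlying a looped simple graph given by its adjacency matrix. -/
def toSimpleGraph (A : Matrix V V (ZMod 2)) : SimpleGraph V where
  Adj v w := v ≠ w ∧ A v w = 1 ∧ A w v = 1
  symm := ⟨fun v w ⟨h1, h2, h3⟩ => ⟨Ne.symm h1, h3, h2⟩⟩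
  loopless := ⟨fun v h => h.1 rfl⟩

/-- The open neighborhood `N_G(v)`. -/
def nbhd (A : Matrix V V (ZMod 2)) (v : V) : Set V := {u | u ≠ v ∧ A v u = 1}

/-- `v` is a pendant vertex: `N_G(v) = {w}` for some `w`. -/
def IsPendant (A : Matrix V V (ZMod 2)) (v : V) : Prop := ∃ w, nbhd A v = {w}

/-- `G` has a pair of twin vertices: `v ≠ w` with `N_G(v) - {w} = N_G(w) - {v}`. -/
def HasTwins (A : Matrix V V (ZMod 2)) : Prop :=
  ∃ v w, v ≠ w ∧ nbhd A v \ {w} = nbhd A w \ {v}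

/-- The cut-rank `c_G(X)`: the GF(2)-rank of the submatrix `A[V - X, X]`
(columns indexed by `X`, rows indexed by `V - X`). -/
noncomputable def cutRank (A : Matrix V V (ZMod 2)) (X : Set V) : ℕ :=
  Module.finrank (ZMod 2)
    (Submodule.span (ZMod 2) ((fun x : V => fun w : ↥(Xᶜ) => A w.1 x) '' X))

/-- `τ_G(X) = ⋃_{x ∈ X} τ_G(x)`, the union of the vertex triples of members of `X`. -/
def tauSet (X : Set V) : Set (V × Fin 3) := {p | p.1 ∈ X}

/-- Loop complementation at `v`. -/
def loopComp (A : Matrix V V (ZMod 2)) (v : V) : Matrix V V (ZMod 2) :=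
  fun x y => A x y + if x = v ∧ y = v then 1 else 0

/-- Simple local complementation at `v`. -/
def simpleLocalComp (A : Matrix V V (ZMod 2)) (v : V) : Matrix V V (ZMod 2) :=
  fun x y => A x y +
    if x ≠ y ∧ (x ≠ v ∧ A v x = 1) ∧ (y ≠ v ∧ A v y = 1) then 1 else 0

/-- Non-simple local complementation at `v`. -/
def nonSimpleLocalComp (A : Matrix V V (ZMod 2)) (v : V) : Matrix V V (ZMod 2) :=
  fun x y => simpleLocalComp A v x y + if x = y ∧ x ≠ v ∧ A v x = 1 then 1 else 0

/-- One local move. -/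
def LocalStep (A B : Matrix V V (ZMod 2)) : Prop :=
  ∃ v, B = loopComp A v ∨ B = simpleLocalComp A v ∨ B = nonSimpleLocalComp A v

/-- Local equivalence: a finite sequence of loop complementations and
(simple or non-simple) local complementations. -/
def LocallyEquiv (A B : Matrix V V (ZMod 2)) : Prop :=
  Relation.ReflTransGen LocalStep A B

/-- `G` has a split: a bipartition `(V₁, V₂)` of `V` with `|V₁|, |V₂| ≥ 2` such that the
GF(2)-rank of `A[V₁, V₂]` is at most 1. -/
def HasSplit (A : Matrix V V (ZMod 2)) : Prop :=
  ∃ X : Set V, 2 ≤ X.ncard ∧ 2 ≤ Xᶜ.ncard ∧ cutRank A X ≤ 1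

/-- A transverse circuit: a circuit of the isotropic matroid meeting each
vertex triple at most once. -/
def IsTransverseCircuit (A : Matrix V V (ZMod 2)) (C : Set (V × Fin 3)) : Prop :=
  iasCircuit A C ∧ ∀ p ∈ C, ∀ q ∈ C, p.1 = q.1 → p = q

/-- An isotropic `k`-separation of `G`: `|X|, |V - X| ≥ k` and `c_G(X) < k`. -/
def IsotropicSep (A : Matrix V V (ZMod 2)) (k : ℕ) (X : Set V) : Prop :=
  k ≤ X.ncard ∧ k ≤ Xᶜ.ncard ∧ cutRank A X < k

/-- The isotropic connectivity `κ_B(G)`, with `min ∅ = ∞`. -/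
noncomputable def kappaB (A : Matrix V V (ZMod 2)) : ℕ∞ :=
  sInf {j : ℕ∞ | ∃ k : ℕ, (k : ℕ∞) = j ∧ ∃ X, IsotropicSep A k X}

/-- The 5-cycle `C₅`. -/
def C5mat : Matrix (Fin 5) (Fin 5) (ZMod 2) :=
  fun i j => if (i.val + 1) % 5 = j.val ∨ (j.val + 1) % 5 = i.val then 1 else 0

/-- The wheel `W₅` : a 5-cycle on `{0,…,4}` plus a hub `5` adjacent to all. -/
def W5mat : Matrix (Fin 6) (Fin 6) (ZMod 2) :=
  fun i j =>
    if (i.val = 5 ∧ j.val ≠ 5) ∨ (j.val = 5 ∧ i.val ≠ 5) then 1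
    else if i.val ≠ 5 ∧ j.val ≠ 5 ∧ ((i.val + 1) % 5 = j.val ∨ (j.val + 1) % 5 = i.val) then 1
    else 0

/-! Since `τ(M) ≥ 3`, the columns of `IAS(G)` are nonzero and pairwise distinct (no loops, no
parallel pairs). A set of nonzero distinct vectors spanning a space of dimension at most 2 over
GF(2) has at most 3 elements, so every set of size at least 4 has rank at least 3: ordinary
3-separations with both sides of size at least 4 are vertical.

Conversely, let `S` be a vertical 3-separation with `|S| ≤ 5`. At most two vertices `b, c` have
two or more of their three elements in `S`. Every other vertex has two elements in `W − S`, and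
since `φ(v) + χ(v) + ψ(v) = 0` all three of its columns lie in the span of `W − S`. The columns of
the vertices other than `b, c` span everything: a nonzero functional vanishing on them is supported
on `{b, c}`, so the row of `b`, the row of `c`, or their sum vanishes off `{b, c}`, and each case
produces a loop or a parallel pair among the columns of `b` and `c`. Hence `r(W − S) = n` and
`λ(S) = r(S) ≥ 3`, a contradiction. -/

open Module Submodule Set

set_option linter.unusedSectionVars false

lemma ZMod.two_cases (x : ZMod 2) : x = 0 ∨ x = 1 := by
  revert x
  decide

lemma Set.exists_ne_subset_pair {α : Type*} [Finite α] {s : Set α} (hs : s.ncard ≤ 2)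
    (hα : 2 ≤ Nat.card α) : ∃ a b, a ≠ b ∧ s ⊆ {a, b} := by
  obtain ⟨t, hst, -, ht⟩ := exists_subsuperset_card_eq (subset_univ s) hs
    (by rwa [ncard_univ])
  obtain ⟨a, b, hab, rfl⟩ := ncard_eq_two.1 ht
  exact ⟨a, b, hab, hst⟩

lemma ncard_lt_card_pow_finrank_span {K E : Type*} [Field K] [Fintype K] [AddCommGroup E]
    [Module K E] [FiniteDimensional K E] {T : Set E} (h0 : (0 : E) ∉ T) :
    T.ncard < Fintype.card K ^ finrank K (span K T) := by
  have : Finite E := Module.finite_of_finite K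
  calc T.ncard < (insert 0 T).ncard := by rw [ncard_insert_of_notMem h0]; omega
    _ ≤ (span K T : Set E).ncard :=
        ncard_le_ncard (insert_subset (zero_mem _) subset_span)
    _ = Fintype.card K ^ finrank K (span K T) := by
        rw [← Nat.card_coe_set_eq, SetLike.coe_sort_coe, Module.natCard_eq_pow_finrank (K := K),
          Nat.card_eq_fintype_card]

section IsotropicMatroid

variable {A : Matrix V V (ZMod 2)}

lemma iasCol_zero (A : Matrix V V (ZMod 2)) (v : V) : iasCol A (v, 0) = Pi.single v 1 := by
  funext w; simp [iasCol, Pi.single_apply]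

lemma iasCol_one (A : Matrix V V (ZMod 2)) (v : V) : iasCol A (v, 1) = fun w => A w v := by
  funext w; simp [iasCol]

lemma iasCol_two (A : Matrix V V (ZMod 2)) (v : V) :
    iasCol A (v, 2) = iasCol A (v, 0) + iasCol A (v, 1) := by
  funext w; simp [iasCol, add_comm]

lemma span_iasCol_univ (A : Matrix V V (ZMod 2)) : span (ZMod 2) (iasCol A '' univ) = ⊤ := by
  refine eq_top_iff.2 ((Pi.basisFun (ZMod 2) V).span_eq.ge.trans (span_mono ?_))
  rintro _ ⟨v, rfl⟩
  exact ⟨(v, 0), trivial, by rw [iasCol_zero, Pi.basisFun_apply]⟩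

lemma iasRank_eq_card_of_span_eq_top {S : Set (V × Fin 3)}
    (hS : span (ZMod 2) (iasCol A '' S) = ⊤) : iasRank A S = Fintype.card V := by
  rw [iasRank, hS, finrank_top, Module.finrank_fintype_fun_eq_card]

lemma iasRank_univ (A : Matrix V V (ZMod 2)) : iasRank A univ = Fintype.card V :=
  iasRank_eq_card_of_span_eq_top (span_iasCol_univ A)

lemma iasRank_le_card (A : Matrix V V (ZMod 2)) (S : Set (V × Fin 3)) :
    iasRank A S ≤ Fintype.card V := by
  rw [iasRank, ← Module.finrank_fintype_fun_eq_card (ZMod 2)]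
  exact Submodule.finrank_le _

lemma iasRank_le_ncard (A : Matrix V V (ZMod 2)) (S : Set (V × Fin 3)) :
    iasRank A S ≤ S.ncard := by
  have : Fintype ↥(iasCol A '' S) := Fintype.ofFinite _
  calc iasRank A S ≤ (iasCol A '' S).toFinset.card := finrank_span_le_card _
    _ = (iasCol A '' S).ncard := (ncard_eq_toFinset_card' _).symm
    _ ≤ S.ncard := ncard_image_le (toFinite S)

lemma ncard_add_ncard_compl_eq (S : Set (V × Fin 3)) :
    S.ncard + Sᶜ.ncard = 3 * Fintype.card V := by
  rw [ncard_add_ncard_compl, Nat.card_eq_fintype_card, Fintype.card_prod, Fintype.card_fin,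
    mul_comm]

lemma iasLambda_le_iasRank (A : Matrix V V (ZMod 2)) (S : Set (V × Fin 3)) :
    iasLambda A S ≤ iasRank A S := by
  have := iasRank_le_card A Sᶜ
  rw [iasLambda, iasRank_univ]
  omega

lemma iasLambda_compl (A : Matrix V V (ZMod 2)) (S : Set (V × Fin 3)) :
    iasLambda A Sᶜ = iasLambda A S := by
  rw [iasLambda, iasLambda, compl_compl, add_comm]

lemma VerticalSep.compl {k : ℕ} {S : Set (V × Fin 3)} (h : VerticalSep A k S) :
    VerticalSep A k Sᶜ := by
  obtain ⟨hk, hlam, hr, hrc⟩ := h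
  exact ⟨hk, by rwa [iasLambda_compl], hrc, by rwa [compl_compl]⟩

lemma VerticalSep.ordinarySep {k : ℕ} {S : Set (V × Fin 3)} (h : VerticalSep A k S) :
    OrdinarySep A k S :=
  ⟨h.1, h.2.1, h.2.2.1.trans (iasRank_le_ncard A S), h.2.2.2.trans (iasRank_le_ncard A Sᶜ)⟩

lemma iasTau_le_of_iasRank_lt {T : Set (V × Fin 3)} (hr : iasRank A T < T.ncard)
    (hc : T.ncard ≤ Tᶜ.ncard) : iasTau A ≤ T.ncard :=
  sInf_le ⟨T.ncard, rfl, T, by omega, (iasLambda_le_iasRank A T).trans_lt hr, le_rfl, hc⟩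

lemma iasCol_ne_zero (h3 : 3 ≤ iasTau A) (p : V × Fin 3) : iasCol A p ≠ 0 := by
  intro hp
  have hn : 1 ≤ Fintype.card V := Fintype.card_pos_iff.2 ⟨p.1⟩
  have hr : iasRank A {p} = 0 := by
    rw [iasRank, image_singleton, hp, span_zero_singleton, finrank_bot]
  have hτ := iasTau_le_of_iasRank_lt (A := A) (T := {p})
    (by rw [hr, ncard_singleton]; omega)
    (by have := ncard_add_ncard_compl_eq {p}; rw [ncard_singleton] at *; omega)
  rw [ncard_singleton] at hτ
  exact absurd (h3.trans hτ) (by decide)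

lemma iasCol_injective (h3 : 3 ≤ iasTau A) (hn : 2 ≤ Fintype.card V) :
    Function.Injective (iasCol A) := by
  intro p q hpq
  by_contra hne
  have hr : iasRank A {p, q} ≤ 1 := by
    have himg : iasCol A '' {p, q} = iasCol A '' {q} := by
      rw [image_pair, hpq, pair_eq_singleton, image_singleton]
    have := iasRank_le_ncard A {q}
    rwa [iasRank, himg, ← iasRank, ncard_singleton] at *
  have h2 : ({p, q} : Set (V × Fin 3)).ncard = 2 := ncard_pair hne
  have hτ := iasTau_le_of_iasRank_lt (A := A) (T := {p, q}) (by omega)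
    (by have := ncard_add_ncard_compl_eq {p, q}; omega)
  rw [h2] at hτ
  exact absurd (h3.trans hτ) (by decide)

lemma three_le_iasRank (h3 : 3 ≤ iasTau A) (hn : 2 ≤ Fintype.card V) {S : Set (V × Fin 3)}
    (hS : 4 ≤ S.ncard) : 3 ≤ iasRank A S := by
  by_contra! hr
  have h0 : (0 : V → ZMod 2) ∉ iasCol A '' S := fun ⟨p, _, hp⟩ => iasCol_ne_zero h3 p hp
  have hlt := ncard_lt_card_pow_finrank_span (K := ZMod 2) h0
  rw [ncard_image_of_injective S (iasCol_injective h3 hn), ZMod.card, ← iasRank] at hlt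
  have : 2 ^ iasRank A S ≤ 2 ^ 2 := Nat.pow_le_pow_right two_pos (by omega)
  omega

lemma OrdinarySep.verticalSep (h3 : 3 ≤ iasTau A) {S : Set (V × Fin 3)}
    (hS : OrdinarySep A 3 S) (h4 : 4 ≤ S.ncard) (h4c : 4 ≤ Sᶜ.ncard) : VerticalSep A 3 S := by
  have hn : 2 ≤ Fintype.card V := by have := ncard_add_ncard_compl_eq S; omega
  exact ⟨hS.1, hS.2.1, three_le_iasRank h3 hn h4, three_le_iasRank h3 hn h4c⟩

lemma iasCol_mem_span_of_mem_of_mem {T : Set (V × Fin 3)} {v : V} {i j : Fin 3} (hij : i ≠ j)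
    (hi : (v, i) ∈ T) (hj : (v, j) ∈ T) (l : Fin 3) :
    iasCol A (v, l) ∈ span (ZMod 2) (iasCol A '' T) := by
  set U := span (ZMod 2) (iasCol A '' T)
  have mem : ∀ k, (v, k) ∈ T → iasCol A (v, k) ∈ U := fun k hk => subset_span ⟨_, hk, rfl⟩
  have hadd : ∀ x : V → ZMod 2, x + x = 0 :=
    fun x => funext fun w => CharTwo.add_self_eq_zero (x w)
  have h2 := iasCol_two A v
  have h0 : iasCol A (v, 0) = iasCol A (v, 1) + iasCol A (v, 2) := by
    rw [h2, add_comm (iasCol A (v, 0)), ← add_assoc, hadd, zero_add]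
  have h1 : iasCol A (v, 1) = iasCol A (v, 0) + iasCol A (v, 2) := by
    rw [h2, ← add_assoc, hadd, zero_add]
  have h01 : iasCol A (v, 0) ∈ U ∧ iasCol A (v, 1) ∈ U := by
    fin_cases i <;> fin_cases j <;> simp only [ne_eq, not_true_eq_false] at hij <;>
      refine ⟨?_, ?_⟩ <;>
      first
        | exact mem _ ‹_›
        | (rw [h0]; exact add_mem (mem _ ‹_›) (mem _ ‹_›))
        | (rw [h1]; exact add_mem (mem _ ‹_›) (mem _ ‹_›))
  fin_cases l
  · exact h01.1
  · exact h01.2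
  · show iasCol A (v, 2) ∈ U
    rw [h2]; exact add_mem h01.1 h01.2

def heavyVertices (S : Set (V × Fin 3)) : Set V :=
  {v | ∃ i j, i ≠ j ∧ (v, i) ∈ S ∧ (v, j) ∈ S}

lemma two_mul_ncard_heavyVertices_le (S : Set (V × Fin 3)) :
    2 * (heavyVertices S).ncard ≤ S.ncard := by
  classical
  rw [ncard_eq_toFinset_card' (heavyVertices S), ncard_eq_toFinset_card' S]
  calc 2 * (heavyVertices S).toFinset.card
        ≤ (S.toFinset.filter (·.1 ∈ heavyVertices S)).card := by
        refine Finset.mul_card_image_le_card_of_maps_to (f := Prod.fst)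
          (fun p hp => by simpa using (Finset.mem_filter.1 hp).2) 2 fun v hv => ?_
        have hv' := mem_toFinset.1 hv
        obtain ⟨i, j, hij, hi, hj⟩ := id hv'
        exact Finset.one_lt_card.2 ⟨(v, i), by simp [hi, hv'], (v, j), by simp [hj, hv'],
          by simp [hij]⟩
    _ ≤ S.toFinset.card := Finset.card_filter_le _ _

lemma exists_ne_mem_compl_of_notMem_heavyVertices {S : Set (V × Fin 3)} {v : V}
    (hv : v ∉ heavyVertices S) : ∃ i j, i ≠ j ∧ (v, i) ∈ Sᶜ ∧ (v, j) ∈ Sᶜ := by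
  replace hv : ∀ i j, i ≠ j → (v, i) ∈ S → (v, j) ∉ S :=
    fun i j hij hi hj => hv ⟨i, j, hij, hi, hj⟩
  by_cases h0 : (v, 0) ∈ S
  · exact ⟨1, 2, by decide, hv 0 1 (by decide) h0, hv 0 2 (by decide) h0⟩
  by_cases h1 : (v, 1) ∈ S
  · exact ⟨0, 2, by decide, h0, hv 1 2 (by decide) h1⟩
  · exact ⟨0, 1, by decide, h0, h1⟩

lemma exists_iasCol_eq_update (A : Matrix V V (ZMod 2)) (v : V) (a : ZMod 2) :
    ∃ i, iasCol A (v, i) = Function.update (fun w => A w v) v a := by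
  by_cases ha : A v v = a
  · exact ⟨1, by rw [iasCol_one, ← ha, Function.update_eq_self]⟩
  · refine ⟨2, funext fun w => ?_⟩
    rcases eq_or_ne w v with rfl | hw
    · have : ∀ x y : ZMod 2, x ≠ y → x + 1 = y := by decide
      simpa [iasCol] using this _ _ ha
    · simp [iasCol, hw]

lemma not_forall_apply_eq_zero_off_pair (hA : A.IsSymm) (h3 : 3 ≤ iasTau A) {b c : V}
    (hbc : b ≠ c) : ¬ ∀ u, u ≠ b → u ≠ c → A b u = 0 := by
  intro h
  obtain ⟨i, hi⟩ := exists_iasCol_eq_update A b 0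
  have hcol : iasCol A (b, i) = Pi.single c (A c b) := by
    rw [hi]; funext w
    rcases eq_or_ne w b with rfl | hwb
    · simp [hbc]
    rcases eq_or_ne w c with rfl | hwc
    · simp [hwb]
    simp [hwb, hwc, hA.apply, h w hwb hwc]
  rcases ZMod.two_cases (A c b) with h0 | h1
  · exact iasCol_ne_zero h3 _ (by rw [hcol, h0, Pi.single_zero])
  · have hn : 2 ≤ Fintype.card V := Fintype.one_lt_card_iff.2 ⟨b, c, hbc⟩
    have := iasCol_injective h3 hn (hcol.trans (by rw [h1, iasCol_zero]))
    exact hbc (congrArg Prod.fst this)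

lemma not_forall_apply_eq_apply_off_pair (hA : A.IsSymm) (h3 : 3 ≤ iasTau A) {b c : V}
    (hbc : b ≠ c) : ¬ ∀ u, u ≠ b → u ≠ c → A b u = A c u := by
  intro h
  obtain ⟨i, hi⟩ := exists_iasCol_eq_update A b (A b c)
  obtain ⟨j, hj⟩ := exists_iasCol_eq_update A c (A c b)
  have hcol : iasCol A (b, i) = iasCol A (c, j) := by
    rw [hi, hj]; funext w
    rcases eq_or_ne w b with rfl | hwb
    · simp [hbc]
    rcases eq_or_ne w c with rfl | hwc
    · simp [hwb]
    simp [hwb, hwc, hA.apply, h w hwb hwc]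
  have hn : 2 ≤ Fintype.card V := Fintype.one_lt_card_iff.2 ⟨b, c, hbc⟩
  exact hbc (congrArg Prod.fst (iasCol_injective h3 hn hcol))

lemma span_iasCol_off_pair_eq_top (hA : A.IsSymm) (h3 : 3 ≤ iasTau A) {b c : V}
    (hbc : b ≠ c) : span (ZMod 2) (iasCol A '' {p | p.1 ≠ b ∧ p.1 ≠ c}) = ⊤ := by
  by_contra hU
  obtain ⟨f, hf0, hUf⟩ := exists_le_ker_of_lt_top _ (lt_top_iff_ne_top.2 hU)
  have hker : ∀ u, u ≠ b → u ≠ c → ∀ l, f (iasCol A (u, l)) = 0 :=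
    fun u hb hc l => hUf (subset_span ⟨(u, l), ⟨hb, hc⟩, rfl⟩)
  set y : V → ZMod 2 := fun w => f (Pi.single w 1)
  have hf : ∀ x, f x = x b * y b + x c * y c := by
    intro x
    have hsum : f x = ∑ w, x w * y w := by
      rw [f.pi_apply_eq_sum_univ x]
      refine Finset.sum_congr rfl fun w _ => ?_
      rw [smul_eq_mul]
      congr 2
      funext j
      simp [Pi.single_apply, eq_comm]
    rw [hsum, Fintype.sum_eq_add b c hbc]
    rintro w ⟨hwb, hwc⟩
    simp [y, ← iasCol_zero A w, hker w hwb hwc 0]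
  have hrow : ∀ u, u ≠ b → u ≠ c → A b u * y b + A c u * y c = 0 := fun u hb hc => by
    rw [← hker u hb hc 1, hf, iasCol_one]
  rcases ZMod.two_cases (y b) with hb | hb <;> rcases ZMod.two_cases (y c) with hc | hc
  · exact hf0 (LinearMap.ext fun x => by simp [hf, hb, hc])
  · exact not_forall_apply_eq_zero_off_pair hA h3 hbc.symm fun u hc' hb' => by
      simpa [hb, hc] using hrow u hb' hc'
  · exact not_forall_apply_eq_zero_off_pair hA h3 hbc fun u hb' hc' => by
      simpa [hb, hc] using hrow u hb' hc'
  · exact not_forall_apply_eq_apply_off_pair hA h3 hbc fun u hb' hc' =>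
      CharTwo.add_eq_zero.1 (by simpa [hb, hc] using hrow u hb' hc')

lemma six_le_ncard_of_verticalSep (hA : A.IsSymm) (h3 : 3 ≤ iasTau A)
    {S : Set (V × Fin 3)} (hS : VerticalSep A 3 S) : 6 ≤ S.ncard := by
  by_contra! h5
  obtain ⟨-, hlam, hr, -⟩ := hS
  have hn : 2 ≤ Fintype.card V := by have := iasRank_le_card A S; omega
  have hB : (heavyVertices S).ncard ≤ 2 := by
    have := two_mul_ncard_heavyVertices_le S; omega
  obtain ⟨b, c, hbc, hBbc⟩ := exists_ne_subset_pair hB (by rwa [Nat.card_eq_fintype_card])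
  have htop : span (ZMod 2) (iasCol A '' Sᶜ) = ⊤ := by
    refine eq_top_iff.2 ((span_iasCol_off_pair_eq_top hA h3 hbc).ge.trans (span_le.2 ?_))
    rintro _ ⟨⟨v, l⟩, ⟨hvb, hvc⟩, rfl⟩
    have hv : v ∉ heavyVertices S := fun h => by
      rcases hBbc h with h | h <;> contradiction
    obtain ⟨i, j, hij, hi, hj⟩ := exists_ne_mem_compl_of_notMem_heavyVertices hv
    exact iasCol_mem_span_of_mem_of_mem hij hi hj l
  have hrc := iasRank_eq_card_of_span_eq_top htop
  rw [iasLambda, hrc, iasRank_univ] at hlam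
  omega

end IsotropicMatroid

theorem stmt14 (A : Matrix V V (ZMod 2)) (hA : A.IsSymm) (h3 : 3 ≤ iasTau A) :
    {S : Set (V × Fin 3) | OrdinarySep A 3 S ∧ 6 ≤ S.ncard ∧ 6 ≤ Sᶜ.ncard} =
      {S : Set (V × Fin 3) | OrdinarySep A 3 S ∧ 4 ≤ S.ncard ∧ 4 ≤ Sᶜ.ncard} ∧
    {S : Set (V × Fin 3) | OrdinarySep A 3 S ∧ 4 ≤ S.ncard ∧ 4 ≤ Sᶜ.ncard} =
      {S : Set (V × Fin 3) | VerticalSep A 3 S} := by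
  have hsix : ∀ S, VerticalSep A 3 S → 6 ≤ S.ncard ∧ 6 ≤ Sᶜ.ncard := fun S hS =>
    ⟨six_le_ncard_of_verticalSep hA h3 hS, six_le_ncard_of_verticalSep hA h3 hS.compl⟩
  constructor
  · ext S
    refine ⟨fun ⟨hS, h6, h6c⟩ => ⟨hS, by omega, by omega⟩, fun ⟨hS, h4, h4c⟩ => ?_⟩
    exact ⟨hS, hsix S (hS.verticalSep h3 h4 h4c)⟩
  · ext S
    refine ⟨fun ⟨hS, h4, h4c⟩ => hS.verticalSep h3 h4 h4c, fun hS => ?_⟩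
    obtain ⟨h6, h6c⟩ := hsix S hS
    exact ⟨hS.ordinarySep, by omega, by omega⟩
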